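/- arXiv:2401.04495 — 8 statements merged into one kernel-verified Lean document; each statement's English description precedes it below -/
import Mathlib

section
/- Let (V, +) and (V, ∘) be two F_2-vector space structures on the same finite set V with the same zero element. Define W_∘ := {k ∈ V : ∀x ∈ V, x + k = x ∘ k}. Then W_∘ is closed under both + and ∘, and + and ∘ agree on W_∘; in particular W_∘ is a subspace of both (V, +) and (V, ∘). -/
/-- `IsElemAb2 z p` : `p` is an elementary abelian 2-group (F_2-vector space)
operation on `V` with identity `z`. -/
def IsElemAb2 {V : Type*} (z : V) (p : V → V → V) : Prop :=
  (∀ a b, p a b = p b a) ∧ (∀ a b c, p (p a b) c = p a (p b c)) ∧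
  (∀ a, p a z = a) ∧ (∀ a, p a a = z)

/-- The weak-key space W_∘ = {k | ∀x, x + k = x ∘ k} is closed under both
operations, on which the two operations agree; in particular it is a subspace
of both structures. -/
theorem weak_keys_subspace (V : Type*) [Finite V] (z : V) (p q : V → V → V)
    (hp : IsElemAb2 z p) (hq : IsElemAb2 z q) :
    (∀ k, (∀ x, p x k = q x k) → ∀ k', (∀ x, p x k' = q x k') →
        ∀ x, p x (p k k') = q x (p k k')) ∧
    (∀ k, (∀ x, p x k = q x k) → ∀ k', (∀ x, p x k' = q x k') →
        ∀ x, p x (q k k') = q x (q k k')) ∧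
    (∀ k, (∀ x, p x k = q x k) → ∀ k', (∀ x, p x k' = q x k') →
        p k k' = q k k') := by
  obtain ⟨pc, pa, -, -⟩ := hp
  obtain ⟨qc, qa, -, -⟩ := hq
  have agree : ∀ k, (∀ x, p x k = q x k) → ∀ k', (∀ x, p x k' = q x k') →
      p k k' = q k k' := fun k _ k' hk' => hk' k
  have closed : ∀ k, (∀ x, p x k = q x k) → ∀ k', (∀ x, p x k' = q x k') →
      ∀ x, p x (p k k') = q x (p k k') := by
    intro k hk k' hk' x
    calc p x (p k k') = p (p x k) k' := (pa x k k').symm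
      _ = q (p x k) k' := hk' _
      _ = q (q x k) k' := by rw [hk]
      _ = q x (q k k') := qa x k k'
      _ = q x (p k k') := by rw [agree k hk k' hk']
  refine ⟨closed, ?_, agree⟩
  intro k hk k' hk' x
  rw [← agree k hk k' hk']
  exact closed k hk k' hk' x
end

section
/- Let (V,+) and (V,∘) be two F_2-vector space structures on V with common zero such that T_+ ≤ AGL(V,∘) and T_∘ ≤ AGL(V,+). Then for all Δ, x, k ∈ V: (x + k) ∘ ((x ∘ Δ) + k) = Δ + k·Δ, where k·Δ := k + Δ + (k ∘ Δ). -/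
/-- cancel on the right: `q (q a k) k = a`. -/
lemma ab2_cancel {V : Type*} {z : V} {q : V → V → V} (h : IsElemAb2 z q)
    (a k : V) : q (q a k) k = a := by
  obtain ⟨hc, ha, hz, hi⟩ := h
  rw [ha, hi, hz]

lemma ab2_key {V : Type*} {z : V} {q : V → V → V} (h : IsElemAb2 z q)
    (a k d : V) : q (q a k) (q (q a d) k) = d := by
  obtain ⟨hc, ha, hz, hi⟩ := h
  calc q (q a k) (q (q a d) k)
      = q (q a k) (q k (q a d)) := by rw [hc (q a d) k]
    _ = q (q (q a k) k) (q a d) := (ha _ _ _).symm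
    _ = q a (q a d) := by rw [ab2_cancel ⟨hc, ha, hz, hi⟩]
    _ = q (q a a) d := (ha _ _ _).symm
    _ = q z d := by rw [hi]
    _ = d := by rw [hc, hz]

lemma ab2_left {V : Type*} {z : V} {p : V → V → V} (h : IsElemAb2 z p)
    (Δ k d : V) : p Δ (p (p k Δ) d) = p k d := by
  obtain ⟨hc, ha, hz, hi⟩ := h
  calc p Δ (p (p k Δ) d)
      = p (p Δ (p k Δ)) d := (ha _ _ _).symm
    _ = p (p Δ (p Δ k)) d := by rw [hc k Δ]
    _ = p (p (p Δ Δ) k) d := by rw [ha Δ Δ k]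
    _ = p (p z k) d := by rw [hi]
    _ = p k d := by rw [hc z k, hz]

/-- If T_+ ≤ AGL(V,∘) and T_∘ ≤ AGL(V,+), then for all Δ, x, k :
(x + k) ∘ ((x ∘ Δ) + k) = Δ + k·Δ, where k·Δ = k + Δ + (k ∘ Δ). -/
theorem key_addition_error (V : Type*) (z : V) (p q : V → V → V)
    (hp : IsElemAb2 z p) (hq : IsElemAb2 z q)
    -- every +-translation is ∘-affine
    (hTp : ∀ k : V, ∃ L : V → V, Function.Bijective L ∧
      (∀ a b, L (q a b) = q (L a) (L b)) ∧ ∃ c, ∀ x, p x k = q (L x) c)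
    -- every ∘-translation is +-affine
    (hTq : ∀ k : V, ∃ L : V → V, Function.Bijective L ∧
      (∀ a b, L (p a b) = p (L a) (L b)) ∧ ∃ c, ∀ x, q x k = p (L x) c) :
    ∀ Δ x k : V,
      q (p x k) (p (q x Δ) k) = p Δ (p (p k Δ) (q k Δ)) := by
  intro Δ x k
  obtain ⟨hpc, hpa, hpz, hpi⟩ := hp
  obtain ⟨hqc, hqa, hqz, hqi⟩ := hq
  have hp' : IsElemAb2 z p := ⟨hpc, hpa, hpz, hpi⟩
  have hq' : IsElemAb2 z q := ⟨hqc, hqa, hqz, hqi⟩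
  obtain ⟨N, -, hNlin, c, hN⟩ := hTp k
  obtain ⟨M, -, hMlin, d, hM⟩ := hTq k
  -- N z = z, hence c = k
  have hNz : N z = z := by
    have h1 := hNlin z z
    rw [hqz] at h1
    exact h1.trans (hqi (N z))
  have hck : c = k := by
    have h1 := hN z
    rw [hNz, hpc, hpz, hqc, hqz] at h1
    exact h1.symm
  -- M z = z, hence d = k
  have hMz : M z = z := by
    have h1 := hMlin z z
    rw [hpz] at h1
    exact h1.trans (hpi (M z))
  have hdk : d = k := by
    have h1 := hM z
    rw [hMz, hqc, hqz, hpc, hpz] at h1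
    exact h1.symm
  rw [hck] at hN
  rw [hdk] at hM
  -- M k = k
  have hMk : M k = k := by
    have h1 := hM k
    rw [hqi] at h1
    have h2 : p (p (M k) k) k = p z k := by rw [← h1]
    rw [ab2_cancel hp' (M k) k, hpc, hpz] at h2
    exact h2
  -- LHS = N Δ
  have hLHS : q (p x k) (p (q x Δ) k) = N Δ := by
    rw [hN x, hN (q x Δ), hNlin, ab2_key hq' (N x) k (N Δ)]
  -- N Δ = q (p Δ k) k
  have h3 : N Δ = q (p Δ k) k := by
    rw [hN Δ, ab2_cancel hq' (N Δ) k]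
  -- q (p Δ k) k = M Δ
  have h4 : q (p Δ k) k = M Δ := by
    rw [hM (p Δ k), hMlin, hMk, ab2_cancel hp' (M Δ) k]
  -- M Δ = p (q Δ k) k
  have h5 : M Δ = p (q Δ k) k := by
    rw [hM Δ, ab2_cancel hp' (M Δ) k]
  rw [hLHS, h3, h4, h5, ab2_left hp' Δ k (q k Δ), hpc, hqc]
end

section
/- Let (V,+) and (V,∘) be as above with T_+ ≤ AGL(V,∘) and T_∘ ≤ AGL(V,+). Then the dot product a·b := a + b + a∘b is symmetric and F_2-bilinear with respect to + (i.e., (a+a')·b = a·b + a'·b for all a, a', b ∈ V). -/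
/-- If T_+ ≤ AGL(V,∘) and T_∘ ≤ AGL(V,+), the dot product
a·b := a + b + a∘b is symmetric and F_2-bilinear with respect to +. -/
theorem dot_symmetric_bilinear (V : Type*) (z : V) (p q : V → V → V)
    (hp : IsElemAb2 z p) (hq : IsElemAb2 z q)
    (hTp : ∀ k : V, ∃ L : V → V, Function.Bijective L ∧
      (∀ a b, L (q a b) = q (L a) (L b)) ∧ ∃ c, ∀ x, p x k = q (L x) c)
    (hTq : ∀ k : V, ∃ L : V → V, Function.Bijective L ∧
      (∀ a b, L (p a b) = p (L a) (L b)) ∧ ∃ c, ∀ x, q x k = p (L x) c) :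
    -- dot a b := p (p a b) (q a b)
    (∀ a b, p (p a b) (q a b) = p (p b a) (q b a)) ∧
    (∀ a a' b, p (p (p a a') b) (q (p a a') b) =
        p (p (p a b) (q a b)) (p (p a' b) (q a' b))) := by
  obtain ⟨pc, pa, pz, pi⟩ := hp
  obtain ⟨qc, qa, qz, qi⟩ := hq
  haveI : Std.Associative p := ⟨pa⟩
  haveI : Std.Commutative p := ⟨pc⟩
  constructor
  · intro a b; rw [pc a b, qc a b]
  · intro a a' b
    obtain ⟨L, -, hadd, c, hc⟩ := hTq b
    -- L z = z
    have hLz : L z = z := by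
      have := hadd z z
      rw [pi z] at this
      rw [this, pi]
    -- c = b
    have hcb : c = b := by
      have h1 : q z b = b := by rw [qc, qz]
      have h2 : q z b = c := by rw [hc z, hLz, pc, pz]
      rw [← h1, h2]
    rw [hcb] at hc
    -- cancellation lemma
    have key : ∀ x y : V, p (p x b) (p y b) = p x y := by
      intro x y
      calc p (p x b) (p y b) = p x (p b (p y b)) := by rw [pa]
        _ = p x (p b (p b y)) := by rw [pc y b]
        _ = p x (p (p b b) y) := by rw [pa]
        _ = p x (p z y) := by rw [pi]
        _ = p x y := by rw [pc z y, pz]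
    rw [hc (p a a'), hc a, hc a', hadd, key, key, key]
    ac_rfl
end

section
/- Let V = (F_2)^n with n ≥ 2, fix a nonzero vector b ∈ (F_2)^{n-2}, and define ∘ on V as in the Calderini–Civino construction determined by b: x ∘ e_1 = x M_{e_1} + e_1, x ∘ e_2 = x M_{e_2} + e_2, x ∘ e_j = x + e_j for j ≥ 3, with M_{e_1}, M_{e_2} the block matrices with identity diagonal blocks and off-diagonal rows (0, b) and (b, 0) respectively. Then ∘ is a well-defined abelian group operation on V making (V, ∘) an F_2-vector space, and the weak-key space W_∘ equals span{e_3, …, e_n}, of dimension n − 2. -/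
/-- The Calderini–Civino operation on V = (F_2)^2 ⊕ (F_2)^m (i.e. (F_2)^n with
n = m + 2), determined by a vector b ∈ (F_2)^m:
x ∘ y = x + y + (x₁y₂ + x₂y₁)·(0,b).  This is exactly the operation with
x ∘ e₁ = x M_{e₁} + e₁, x ∘ e₂ = x M_{e₂} + e₂ and x ∘ e_j = x + e_j for j ≥ 3. -/
def circP (m : ℕ) (b : Fin m → ZMod 2)
    (x y : (Fin 2 ⊕ Fin m) → ZMod 2) : (Fin 2 ⊕ Fin m) → ZMod 2 :=
  x + y + (x (Sum.inl 0) * y (Sum.inl 1) + x (Sum.inl 1) * y (Sum.inl 0)) •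
    Sum.elim (0 : Fin 2 → ZMod 2) b

/-- The weak-key set of circP is the span of e₃, …, e_n. -/
theorem circP_weak_key_set (m : ℕ) (b : Fin m → ZMod 2) (hb : b ≠ 0) :
    {k : (Fin 2 ⊕ Fin m) → ZMod 2 | ∀ x, x + k = circP m b x k} =
      {k | ∀ i : Fin 2, k (Sum.inl i) = 0} := by
  obtain ⟨j0, hj0⟩ := Function.ne_iff.mp hb
  ext k
  simp only [Set.mem_setOf_eq]
  constructor
  · intro h i
    have key : ∀ x : (Fin 2 ⊕ Fin m) → ZMod 2,
        (x (Sum.inl 0) * k (Sum.inl 1) + x (Sum.inl 1) * k (Sum.inl 0)) * b j0 = 0 := by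
      intro x
      have := congrFun (h x) (Sum.inr j0)
      simp only [circP, Pi.add_apply, Pi.smul_apply, smul_eq_mul, Sum.elim_inr] at this
      linear_combination -this
    fin_cases i
    · have := key (Function.update (0 : (Fin 2 ⊕ Fin m) → ZMod 2) (Sum.inl 1) 1)
      simp only [Function.update_apply, Pi.zero_apply] at this
      norm_num at this
      tauto
    · have := key (Function.update (0 : (Fin 2 ⊕ Fin m) → ZMod 2) (Sum.inl 0) 1)
      simp only [Function.update_apply, Pi.zero_apply] at this
      norm_num at this
      tauto
  · intro h x
    simp [circP, h 0, h 1]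

/-- The operation ∘ determined by a nonzero b is an abelian group operation
making (V,∘) an F_2-vector space, and its weak-key space is
span{e₃,…,e_n}, of dimension n − 2 (cardinality 2^(n-2)). -/
theorem circP_group_and_weak_keys (m : ℕ) (b : Fin m → ZMod 2) (hb : b ≠ 0) :
    (∀ x y, circP m b x y = circP m b y x) ∧
    (∀ x y w, circP m b (circP m b x y) w = circP m b x (circP m b y w)) ∧
    (∀ x, circP m b x 0 = x) ∧
    (∀ x, circP m b x x = 0) ∧
    {k : (Fin 2 ⊕ Fin m) → ZMod 2 | ∀ x, x + k = circP m b x k} =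
      {k | ∀ i : Fin 2, k (Sum.inl i) = 0} ∧
    Nat.card {k : (Fin 2 ⊕ Fin m) → ZMod 2 // ∀ x, x + k = circP m b x k} =
      2 ^ m := by
  have h2 : ∀ a : ZMod 2, a + a = 0 := fun a => CharTwo.add_self_eq_zero a
  have hset := circP_weak_key_set m b hb
  refine ⟨?_, ?_, ?_, ?_, hset, ?_⟩
  · intro x y; funext j; simp only [circP, Pi.add_apply, Pi.smul_apply, smul_eq_mul]; ring
  · intro x y w; funext j
    simp only [circP, Pi.add_apply, Pi.smul_apply, smul_eq_mul]
    cases j with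
    | inl i =>
      simp only [Sum.elim_inl, Pi.zero_apply]; ring
    | inr j =>
      simp only [Sum.elim_inl, Pi.zero_apply, Sum.elim_inr]; ring
  · intro x; funext j; simp [circP]
  · intro x; funext j
    simp only [circP, Pi.add_apply, Pi.smul_apply, smul_eq_mul, Pi.zero_apply]
    have := h2 (x j + (x (Sum.inl 0) * x (Sum.inl 1)) * Sum.elim (0 : Fin 2 → ZMod 2) b j)
    linear_combination this
  · have hP : ∀ k : (Fin 2 ⊕ Fin m) → ZMod 2,
        (∀ x, x + k = circP m b x k) ↔ ∀ i : Fin 2, k (Sum.inl i) = 0 := by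
      intro k
      exact Set.ext_iff.mp hset k
    have e : {k : (Fin 2 ⊕ Fin m) → ZMod 2 // ∀ x, x + k = circP m b x k} ≃
        (Fin m → ZMod 2) :=
      { toFun := fun k j => k.1 (Sum.inr j)
        invFun := fun g => ⟨Sum.elim 0 g, (hP _).mpr fun i => rfl⟩
        left_inv := fun k => by
          ext j
          cases j with
          | inl i => exact (((hP k.1).mp k.2) i).symm
          | inr j => rfl
        right_inv := fun g => rfl }
    rw [Nat.card_congr e]
    simp [Nat.card_eq_fintype_card]
end

section
/- With V = (F_2)^n, d = n − 2, and ∘ the operation determined by a nonzero vector b ∈ (F_2)^{n−2} as in the previous construction, a matrix λ ∈ (F_2)^{n×n} lies in H_∘ := GL(V,+) ∩ GL(V,∘) if and only if λ is of block upper-triangular form λ = [[A, B],[0, D]] with A ∈ GL_2(F_2), D ∈ GL_{n−2}(F_2), B ∈ (F_2)^{2×(n−2)}, and bD = b. -/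
open Matrix

/-- The quadratic form coefficient. -/
def qf (m : ℕ) (x y : (Fin 2 ⊕ Fin m) → ZMod 2) : ZMod 2 :=
  x (Sum.inl 0) * y (Sum.inl 1) + x (Sum.inl 1) * y (Sum.inl 0)

lemma circP_eq (m : ℕ) (b : Fin m → ZMod 2) (x y : (Fin 2 ⊕ Fin m) → ZMod 2) :
    circP m b x y = x + y + qf m x y • Sum.elim (0 : Fin 2 → ZMod 2) b := rfl

lemma zmod2_cases : ∀ c : ZMod 2, c ≠ 0 → c = 1 := by decide

lemma zmod2_sub : ∀ u v : ZMod 2, u + v = 1 → u - v = 1 := by decide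

lemma detq : ∀ a b c d x0 x1 y0 y1 : ZMod 2, a * d - b * c = 1 →
    (x0 * a + x1 * c) * (y0 * b + y1 * d) + (x0 * b + x1 * d) * (y0 * a + y1 * c)
      = x0 * y1 + x1 * y0 := by decide

lemma rowzero : ∀ a b c d r0 r1 : ZMod 2, a * d + b * c = 1 →
    r0 * b + r1 * a = 0 → r0 * d + r1 * c = 0 → r0 = 0 ∧ r1 = 0 := by decide

/-- Characterization of H_∘ = GL(V,+) ∩ GL(V,∘): a matrix λ (acting on row
vectors) lies in H_∘ iff λ = [[A, B],[0, D]] with A ∈ GL₂(F₂),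
D ∈ GL_{n−2}(F₂), B arbitrary, and bD = b. -/
theorem mem_H_circ_iff (m : ℕ) (b : Fin m → ZMod 2) (hb : b ≠ 0)
    (lam : Matrix (Fin 2 ⊕ Fin m) (Fin 2 ⊕ Fin m) (ZMod 2)) :
    (Function.Bijective (fun x : (Fin 2 ⊕ Fin m) → ZMod 2 => Matrix.vecMul x lam) ∧
     ∀ x y, Matrix.vecMul (circP m b x y) lam =
        circP m b (Matrix.vecMul x lam) (Matrix.vecMul y lam)) ↔
    (∃ (A : Matrix (Fin 2) (Fin 2) (ZMod 2))
       (B : Matrix (Fin 2) (Fin m) (ZMod 2))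
       (D : Matrix (Fin m) (Fin m) (ZMod 2)),
        IsUnit A ∧ IsUnit D ∧ Matrix.vecMul b D = b ∧
        lam = Matrix.fromBlocks A B 0 D) := by
  set e : (Fin 2 ⊕ Fin m) → ZMod 2 := Sum.elim (0 : Fin 2 → ZMod 2) b with he_def
  have hene : e ≠ 0 := by
    intro h
    exact hb (funext fun k => congrFun h (Sum.inr k))
  constructor
  · rintro ⟨hbij, hmul⟩
    have hinj : Function.Injective (fun x : (Fin 2 ⊕ Fin m) → ZMod 2 => x ᵥ* lam) := hbij.1
    have hU : IsUnit lam := Matrix.vecMul_surjective_iff_isUnit.mp hbij.2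
    -- key bilinear identity
    have key : ∀ x y, qf m x y • (e ᵥ* lam) = qf m (x ᵥ* lam) (y ᵥ* lam) • e := by
      intro x y
      have h := hmul x y
      rw [circP_eq, circP_eq, Matrix.add_vecMul, Matrix.add_vecMul, Matrix.smul_vecMul] at h
      exact add_left_cancel h
    -- a scalar times e vanishing means the scalar vanishes
    have smul_e : ∀ c : ZMod 2, c • e = 0 → c = 0 := by
      intro c h
      by_contra hc
      rw [zmod2_cases c hc, one_smul] at h
      exact hene h
    -- rows of lam via single vectors
    have hrow : ∀ i : Fin 2 ⊕ Fin m, (Pi.single i (1 : ZMod 2)) ᵥ* lam = lam i := by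
      intro i; exact Matrix.single_one_vecMul i lam
    -- applying key to the two top basis vectors
    have hc1 : e ᵥ* lam = qf m (lam (Sum.inl 0)) (lam (Sum.inl 1)) • e := by
      have h := key (Pi.single (Sum.inl 0) 1) (Pi.single (Sum.inl 1) 1)
      rw [hrow, hrow] at h
      have hq : qf m (Pi.single (Sum.inl 0) (1 : ZMod 2)) (Pi.single (Sum.inl 1) 1) = 1 := by
        simp [qf, Pi.single_apply]
      rw [hq, one_smul] at h
      exact h
    -- the scalar is 1
    have hdet1 : qf m (lam (Sum.inl 0)) (lam (Sum.inl 1)) = 1 := by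
      apply zmod2_cases
      intro h0
      rw [h0, zero_smul] at hc1
      have : e = 0 := by
        apply hinj
        show e ᵥ* lam = (0 : (Fin 2 ⊕ Fin m) → ZMod 2) ᵥ* lam
        rw [hc1, Matrix.zero_vecMul]
      exact hene this
    have helam : e ᵥ* lam = e := by rw [hc1, hdet1, one_smul]
    -- mixed pairs give zero
    have hmixed : ∀ (k : Fin m) (i : Fin 2),
        qf m (lam (Sum.inr k)) (lam (Sum.inl i)) = 0 := by
      intro k i
      have h := key (Pi.single (Sum.inr k) 1) (Pi.single (Sum.inl i) 1)
      rw [hrow, hrow] at h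
      have hq : qf m (Pi.single (Sum.inr k) (1 : ZMod 2)) (Pi.single (Sum.inl i) 1) = 0 := by
        simp [qf, Pi.single_apply]
      rw [hq, zero_smul] at h
      exact smul_e _ h.symm
    -- lower-left block vanishes
    have hz : ∀ k : Fin m, lam (Sum.inr k) (Sum.inl 0) = 0 ∧ lam (Sum.inr k) (Sum.inl 1) = 0 := by
      intro k
      exact rowzero (lam (Sum.inl 0) (Sum.inl 0)) (lam (Sum.inl 0) (Sum.inl 1))
        (lam (Sum.inl 1) (Sum.inl 0)) (lam (Sum.inl 1) (Sum.inl 1))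
        (lam (Sum.inr k) (Sum.inl 0)) (lam (Sum.inr k) (Sum.inl 1))
        hdet1 (hmixed k 0) (hmixed k 1)
    refine ⟨Matrix.of fun i j => lam (Sum.inl i) (Sum.inl j),
      Matrix.of fun i k => lam (Sum.inl i) (Sum.inr k),
      Matrix.of fun k l => lam (Sum.inr k) (Sum.inr l), ?_, ?_, ?_, ?_⟩
    case _ =>
      -- IsUnit A
      rw [Matrix.isUnit_iff_isUnit_det, Matrix.det_fin_two]
      have : lam (Sum.inl 0) (Sum.inl 0) * lam (Sum.inl 1) (Sum.inl 1) -
          lam (Sum.inl 0) (Sum.inl 1) * lam (Sum.inl 1) (Sum.inl 0) = 1 :=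
        zmod2_sub _ _ hdet1
      simp only [Matrix.of_apply]
      rw [this]
      exact isUnit_one
    case _ =>
      -- IsUnit D
      have hlam : lam = Matrix.fromBlocks (Matrix.of fun i j => lam (Sum.inl i) (Sum.inl j))
          (Matrix.of fun i k => lam (Sum.inl i) (Sum.inr k)) 0
          (Matrix.of fun k l => lam (Sum.inr k) (Sum.inr l)) := by
        ext i j
        cases i with
        | inl i => cases j <;> simp [Matrix.fromBlocks]
        | inr k =>
          cases j with
          | inl j =>
            simp only [Matrix.fromBlocks_apply₂₁, Matrix.zero_apply]
            fin_cases j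
            · exact (hz k).1
            · exact (hz k).2
          | inr l => simp [Matrix.fromBlocks]
      rw [hlam] at hU
      exact (Matrix.isUnit_fromBlocks_zero₂₁.mp hU).2
    case _ =>
      -- b D = b
      have hlam : lam = Matrix.fromBlocks (Matrix.of fun i j => lam (Sum.inl i) (Sum.inl j))
          (Matrix.of fun i k => lam (Sum.inl i) (Sum.inr k)) 0
          (Matrix.of fun k l => lam (Sum.inr k) (Sum.inr l)) := by
        ext i j
        cases i with
        | inl i => cases j <;> simp [Matrix.fromBlocks]
        | inr k =>
          cases j with
          | inl j =>
            simp only [Matrix.fromBlocks_apply₂₁, Matrix.zero_apply]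
            fin_cases j
            · exact (hz k).1
            · exact (hz k).2
          | inr l => simp [Matrix.fromBlocks]
      rw [hlam] at helam
      funext k
      have h := congrFun helam (Sum.inr k)
      simpa [Matrix.vecMul_fromBlocks, he_def] using h
    case _ =>
      -- block form
      ext i j
      cases i with
      | inl i => cases j <;> simp [Matrix.fromBlocks]
      | inr k =>
        cases j with
        | inl j =>
          simp only [Matrix.fromBlocks_apply₂₁, Matrix.zero_apply]
          fin_cases j
          · exact (hz k).1
          · exact (hz k).2
        | inr l => simp [Matrix.fromBlocks]
  · rintro ⟨A, B, D, hA, hD, hbD, rfl⟩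
    have hU : IsUnit (Matrix.fromBlocks A B 0 D) :=
      Matrix.isUnit_fromBlocks_zero₂₁.mpr ⟨hA, hD⟩
    constructor
    · exact ⟨Matrix.vecMul_injective_iff_isUnit.mpr hU,
        Matrix.vecMul_surjective_iff_isUnit.mpr hU⟩
    · -- multiplicativity
      have hdet : A 0 0 * A 1 1 - A 0 1 * A 1 0 = 1 := by
        rw [← Matrix.det_fin_two]
        have h1 : IsUnit A.det := (Matrix.isUnit_iff_isUnit_det A).mp hA
        exact zmod2_cases _ h1.ne_zero
      have helam : e ᵥ* Matrix.fromBlocks A B 0 D = e := by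
        funext j
        cases j with
        | inl j => simp [Matrix.vecMul_fromBlocks, he_def]
        | inr k =>
          have := congrFun hbD k
          simpa [Matrix.vecMul_fromBlocks, he_def] using this
      have htop : ∀ (x : (Fin 2 ⊕ Fin m) → ZMod 2) (j : Fin 2),
          (x ᵥ* Matrix.fromBlocks A B 0 D) (Sum.inl j) = ((x ∘ Sum.inl) ᵥ* A) j := by
        intro x j
        simp [Matrix.vecMul_fromBlocks]
      have hq : ∀ x y : (Fin 2 ⊕ Fin m) → ZMod 2,
          qf m (x ᵥ* Matrix.fromBlocks A B 0 D) (y ᵥ* Matrix.fromBlocks A B 0 D) = qf m x y := by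
        intro x y
        simp only [qf, htop]
        have hexp : ∀ (v : Fin 2 → ZMod 2) (j : Fin 2),
            (v ᵥ* A) j = v 0 * A 0 j + v 1 * A 1 j := by
          intro v j
          simp [Matrix.vecMul, dotProduct, Fin.sum_univ_two]
        rw [hexp, hexp, hexp, hexp]
        exact detq (A 0 0) (A 0 1) (A 1 0) (A 1 1) (x (Sum.inl 0)) (x (Sum.inl 1))
          (y (Sum.inl 0)) (y (Sum.inl 1)) hdet
      intro x y
      rw [circP_eq, circP_eq, Matrix.add_vecMul, Matrix.add_vecMul, Matrix.smul_vecMul,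
        ← he_def, helam, ← hq x y]
end

section
/- For the operation ∘₄ on (F_2)^4 defined by b = (0,1), the weak-key space W_{∘₄} = {k : ∀x, x + k = x ∘₄ k} equals span{e_3, e_4} and has exactly 4 elements. -/
/-- e₃ = (0,0,1,0) as a row vector of (F_2)^4. -/
def e3vec : Fin 4 → ZMod 2 := Pi.single 2 1

/-- e₄ = (0,0,0,1) as a row vector of (F_2)^4. -/
def e4vec : Fin 4 → ZMod 2 := Pi.single 3 1

/-- The operation ∘₄ on (F_2)^4 from the Calderini–Civino construction with
b = (0,1). -/
def circ4 (x y : Fin 4 → ZMod 2) : Fin 4 → ZMod 2 :=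
  x + y + (x 0 * y 1 + x 1 * y 0) • e4vec

lemma weak_iff (k : Fin 4 → ZMod 2) :
    (∀ x, x + k = circ4 x k) ↔ k 0 = 0 ∧ k 1 = 0 := by
  constructor
  · intro h
    constructor
    · have := congrFun (h (Pi.single 1 1)) 3
      simpa [circ4, e4vec, Pi.single_apply] using this
    · have := congrFun (h (Pi.single 0 1)) 3
      simpa [circ4, e4vec, Pi.single_apply] using this
  · rintro ⟨h0, h1⟩ x
    simp [circ4, h0, h1]

lemma decomp (k : Fin 4 → ZMod 2) (h0 : k 0 = 0) (h1 : k 1 = 0) :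
    k 2 • e3vec + k 3 • e4vec = k := by
  funext i
  fin_cases i <;>
    simp_all [e3vec, e4vec, Pi.single_apply]

/-- The weak-key space of ∘₄ equals span{e₃, e₄} and has exactly 4 elements. -/
theorem circ4_weak_keys :
    {k : Fin 4 → ZMod 2 | ∀ x, x + k = circ4 x k} =
      ↑(Submodule.span (ZMod 2) ({e3vec, e4vec} : Set (Fin 4 → ZMod 2))) ∧
    Nat.card {k : Fin 4 → ZMod 2 // ∀ x, x + k = circ4 x k} = 4 := by
  constructor
  · ext k
    simp only [Set.mem_setOf_eq, SetLike.mem_coe, Submodule.mem_span_pair, weak_iff]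
    constructor
    · rintro ⟨h0, h1⟩
      exact ⟨k 2, k 3, decomp k h0 h1⟩
    · rintro ⟨c, d, rfl⟩
      constructor <;> simp [e3vec, e4vec, Pi.single_apply]
  · have : (fun k : Fin 4 → ZMod 2 => ∀ x, x + k = circ4 x k) =
        fun k => k 0 = 0 ∧ k 1 = 0 := by
      funext k; exact propext (weak_iff k)
    rw [show {k : Fin 4 → ZMod 2 // ∀ x, x + k = circ4 x k} =
        {k : Fin 4 → ZMod 2 // k 0 = 0 ∧ k 1 = 0} from by rw [this]]
    rw [Nat.card_eq_fintype_card]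
    decide
end

section
/- For the s-box γ = [0x0,0xE,0xB,0x1,0x7,0xC,0x9,0x6,0xD,0x3,0x4,0xF,0x2,0x8,0xA,0x5] and the alternative operation ∘₄ defined by b = (0,1), the differential with input difference 0x7 propagates to output difference 0x6 with probability 1: for all x ∈ (F_2)^4, γ(x ∘₄ 0x7) ∘₄ γ(x) = 0x6. In particular γ is differentially 16-uniform with respect to ∘₄. -/
/-- The 4-bit s-box γ = [0,E,B,1,7,C,9,6,D,3,4,F,2,8,A,5] (hexadecimal),
bits most significant first. -/
def gammaSbox : BitVec 4 → BitVec 4 := fun x =>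
  [0x0#4, 0xE#4, 0xB#4, 0x1#4, 0x7#4, 0xC#4, 0x9#4, 0x6#4,
   0xD#4, 0x3#4, 0x4#4, 0xF#4, 0x2#4, 0x8#4, 0xA#4, 0x5#4].getD x.toNat 0

/-- The alternative operation ∘₄ on 4-bit values (msb first) from the
Calderini–Civino construction with b = (0,1):
x ∘₄ y = x ⊕ y ⊕ (x₁y₂ + x₂y₁)·e₄, where x₁ is the msb. -/
def circ4bv (x y : BitVec 4) : BitVec 4 :=
  x ^^^ y ^^^
    (if ((x.getLsbD 3 && y.getLsbD 2) ^^ (x.getLsbD 2 && y.getLsbD 3))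
     then 1#4 else 0#4)

/-- For γ and ∘₄, the input difference 0x7 propagates to output difference 0x6
with probability 1 (the ∘₄-difference of u and v, ∘₄ being elementary abelian,
is u ∘₄ v); in particular γ is differentially 16-uniform w.r.t. ∘₄. -/
theorem gamma_circ4_prob_one :
    (∀ x : BitVec 4, circ4bv (gammaSbox (circ4bv x 0x7#4)) (gammaSbox x) = 0x6#4) ∧
    (∃ a : BitVec 4, a ≠ 0 ∧ ∃ c : BitVec 4,
      Nat.card {x : BitVec 4 //
        circ4bv (gammaSbox (circ4bv x a)) (gammaSbox x) = c} = 16) := by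
  have h : ∀ x : BitVec 4, circ4bv (gammaSbox (circ4bv x 0x7#4)) (gammaSbox x) = 0x6#4 := by
    decide
  refine ⟨h, 0x7#4, by decide, 0x6#4, ?_⟩
  rw [Nat.card_congr (Equiv.subtypeUnivEquiv h),
    Nat.card_congr (⟨BitVec.toFin, BitVec.ofFin, fun _ => rfl, fun _ => rfl⟩ :
      BitVec 4 ≃ Fin (2^4)), Nat.card_eq_fintype_card, Fintype.card_fin]
  norm_num
end

section
/- Let λ : V → V be a bijective map on V = V_1 ⊕ ⋯ ⊕ V_m that is additive for both + and the parallel operation ∘ (i.e., λ ∈ H_∘ = GL(V,+) ∩ GL(V,∘)). Then for any key k ∈ V and any ∘-difference Δ, the composition of key-addition (x ↦ x + k) followed by λ maps a pair with ∘-difference Δ to a pair with ∘-difference λ(Δ + k·Δ), where k·Δ := k + Δ + k∘Δ; in particular if Δ ∈ W_∘ then the output ∘-difference is exactly λ(Δ). -/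
namespace IsElemAb2

variable {V : Type*} {z : V} {p : V → V → V}

lemma comm (h : IsElemAb2 z p) (a b : V) : p a b = p b a := h.1 a b

lemma assoc (h : IsElemAb2 z p) (a b c : V) : p (p a b) c = p a (p b c) := h.2.1 a b c

lemma op_zero (h : IsElemAb2 z p) (a : V) : p a z = a := h.2.2.1 a

lemma op_self (h : IsElemAb2 z p) (a : V) : p a a = z := h.2.2.2 a

lemma zero_op (h : IsElemAb2 z p) (a : V) : p z a = a := by rw [h.comm, h.op_zero]

lemma op_op_cancel_left (h : IsElemAb2 z p) (a b : V) : p a (p a b) = b := by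
  rw [← h.assoc, h.op_self, h.zero_op]

lemma op_op_cancel_right (h : IsElemAb2 z p) (a b : V) : p (p a b) b = a := by
  rw [h.assoc, h.op_self, h.op_zero]

lemma eq_of_op_eq_zero (h : IsElemAb2 z p) {a b : V} (hab : p a b = z) : a = b := by
  rw [← h.op_op_cancel_right a b, hab, h.zero_op]

lemma map_zero_of_map_op (h : IsElemAb2 z p) {L : V → V} (hL : ∀ a b, L (p a b) = p (L a) (L b)) :
    L z = z :=
  calc L z = L (p z z) := by rw [h.op_self]
    _ = z := by rw [hL, h.op_self]

end IsElemAb2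

section AffineTranslation

variable {V : Type*} {z : V} {p q : V → V → V} {L : V → V} {k c : V}

lemma affine_translation_const_eq (hp : IsElemAb2 z p) (hq : IsElemAb2 z q)
    (hL : ∀ a b, L (q a b) = q (L a) (L b)) (hc : ∀ x, p x k = q (L x) c) : c = k := by
  rw [← hp.zero_op k, hc, hq.map_zero_of_map_op hL, hq.zero_op]

lemma affine_translation_map_key (hp : IsElemAb2 z p) (hq : IsElemAb2 z q)
    (hL : ∀ a b, L (q a b) = q (L a) (L b)) (hc : ∀ x, p x k = q (L x) c) : L k = k := by
  have hk : q (L k) k = z := by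
    rw [← hp.op_self k, hc, affine_translation_const_eq hp hq hL hc]
  exact hq.eq_of_op_eq_zero hk

lemma op_affine_translation (hq : IsElemAb2 z q) (hL : ∀ a b, L (q a b) = q (L a) (L b))
    (hc : ∀ x, p x k = q (L x) c) (x y : V) : q (p x k) (p y k) = L (q x y) := by
  rw [hc, hc, hq.comm (L y), ← hq.assoc, hq.op_op_cancel_right, hL]

lemma difference_after_key_addition (hp : IsElemAb2 z p) (hq : IsElemAb2 z q)
    (hL : ∀ a b, L (q a b) = q (L a) (L b)) (hc : ∀ x, p x k = q (L x) c) (Δ x : V) :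
    q (p x k) (p (q x Δ) k) = p Δ (p (p k Δ) (q k Δ)) := by
  have hck := affine_translation_const_eq hp hq hL hc
  calc q (p x k) (p (q x Δ) k) = L Δ := by
        rw [op_affine_translation hq hL hc, hq.op_op_cancel_left]
    _ = q (q k (L Δ)) k := by rw [hq.comm k, hq.op_op_cancel_right]
    _ = p (q k Δ) k := by rw [hc, hL, affine_translation_map_key hp hq hL hc, hck]
    _ = p Δ (p (p k Δ) (q k Δ)) := by
        rw [← hp.assoc, hp.comm k Δ, hp.op_op_cancel_left, hp.comm]

end AffineTranslation

theorem lambda_difference_propagation_general (V : Type*) (z : V) (p q : V → V → V)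
    (hp : IsElemAb2 z p) (hq : IsElemAb2 z q)
    (hTp : ∀ k : V, ∃ L : V → V, Function.Bijective L ∧
      (∀ a b, L (q a b) = q (L a) (L b)) ∧ ∃ c, ∀ x, p x k = q (L x) c)
    (lam : V → V)
    (haddq : ∀ a b, lam (q a b) = q (lam a) (lam b)) :
    ∀ k Δ x : V,
      q (lam (p x k)) (lam (p (q x Δ) k)) =
        lam (p Δ (p (p k Δ) (q k Δ))) ∧
      ((∀ y, p y Δ = q y Δ) →
        q (lam (p x k)) (lam (p (q x Δ) k)) = lam Δ) := by
  intro k Δ x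
  obtain ⟨L, -, hL, c, hc⟩ := hTp k
  have hdiff : q (lam (p x k)) (lam (p (q x Δ) k)) = lam (p Δ (p (p k Δ) (q k Δ))) := by
    rw [← haddq, difference_after_key_addition hp hq hL hc]
  refine ⟨hdiff, fun hweak => ?_⟩
  rw [hdiff, ← hweak k, hp.op_self, hp.op_zero]

/-- If λ ∈ H_∘ = GL(V,+) ∩ GL(V,∘), then key-addition followed by λ maps a
pair with ∘-difference Δ to a pair with ∘-difference λ(Δ + k·Δ), where
k·Δ = k + Δ + k∘Δ; in particular if Δ is a weak key the output ∘-difference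
is exactly λ(Δ).  (The ∘-difference of (u,v) is the unique d with v = u ∘ d,
i.e. u ∘ v.) -/
theorem lambda_difference_propagation (V : Type*) (z : V) (p q : V → V → V)
    (hp : IsElemAb2 z p) (hq : IsElemAb2 z q)
    (hTp : ∀ k : V, ∃ L : V → V, Function.Bijective L ∧
      (∀ a b, L (q a b) = q (L a) (L b)) ∧ ∃ c, ∀ x, p x k = q (L x) c)
    (hTq : ∀ k : V, ∃ L : V → V, Function.Bijective L ∧
      (∀ a b, L (p a b) = p (L a) (L b)) ∧ ∃ c, ∀ x, q x k = p (L x) c)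
    (lam : V → V) (hbij : Function.Bijective lam)
    (haddp : ∀ a b, lam (p a b) = p (lam a) (lam b))
    (haddq : ∀ a b, lam (q a b) = q (lam a) (lam b)) :
    ∀ k Δ x : V,
      q (lam (p x k)) (lam (p (q x Δ) k)) =
        lam (p Δ (p (p k Δ) (q k Δ))) ∧
      ((∀ y, p y Δ = q y Δ) →
        q (lam (p x k)) (lam (p (q x Δ) k)) = lam Δ) :=
  lambda_difference_propagation_general V z p q hp hq hTp lam haddq
end
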